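/- arXiv:1509.05347 — 3 statements merged into one kernel-verified Lean document; each statement's English description precedes it below -/
import Mathlib

section
/- Let H = U(h₃(ℝ))[[ℏ]] where h₃(ℝ) is the 3-dimensional Heisenberg Lie algebra with basis p, q, t, relations [p,q] = t and t central, with its standard Hopf algebra structure (p, q, t primitive). For θ, θ' ∈ ℏℂ[[ℏ]], set F_θ = exp(θ p⊗q) ∈ H⊗H. Then (Δ⊗id)(F_θ^{-1})·(F_{θ'}^{-1}⊗1) = (id⊗Δ)(F_{θ'}^{-1})·(1⊗F_θ^{-1})·Φ_{θ,θ'}, where Φ_{θ,θ'} = exp(−p⊗(θ−θ'−θθ't)⊗q) ∈ H⊗H⊗H. -/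
open scoped TensorProduct

/-- `exp(u)` for a power series `u` over `B` (meaningful when `u` has zero constant term):
the `ℏ^N`-coefficient is `Σ_{k≤N} (1/k!)·(coefficient of ℏ^N in u^k)`. -/
noncomputable def pexp {B : Type*} [Ring B] [Algebra ℂ B] (u : PowerSeries B) :
    PowerSeries B :=
  PowerSeries.mk fun N => ∑ k ∈ Finset.range (N + 1),
    ((k.factorial : ℂ)⁻¹) • (PowerSeries.coeff N (u ^ k))

/-- Embedding of scalar formal power series `ℂ[[ℏ]]` into `B[[ℏ]]`. -/
noncomputable def embC {B : Type*} [Ring B] [Algebra ℂ B] (θ : PowerSeries ℂ) :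
    PowerSeries B :=
  PowerSeries.map (algebraMap ℂ B) θ

/-! In `H ⊗ H ⊗ H` write `x₁₂ = p ⊗ q ⊗ 1`, `x₁₃ = p ⊗ 1 ⊗ q`, `x₂₃ = 1 ⊗ p ⊗ q`, so that
`(Δ ⊗ id)(p ⊗ q) = x₁₃ + x₂₃` and `(id ⊗ Δ)(p ⊗ q) = x₁₂ + x₁₃`. These legs all commute except
`x₂₃` and `x₁₂`, whose commutator `z = p ⊗ t ⊗ q` commutes with all of them. The Weyl relation
`e^{a x₂₃} e^{b x₁₂} = e^{b x₁₂} e^{a x₂₃} e^{ab z}`, the splitting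
`e^{-θ x₁₃} = e^{-θ' x₁₃} e^{(θ'-θ) x₁₃}` and a reordering of commuting factors give the identity.

The exponential laws behind this (`e^{u+v} = e^u e^v` for commuting `u, v`, and
`e^u v = (v + [u,v]) e^u` when `[u,v]` commutes with `u`) are checked coefficientwise: since `u`
is divisible by `ℏ`, only the terms `u^k` with `k ≤ N` of the exponential series reach `ℏ^N`. -/

open PowerSeries Finset
open scoped Nat

theorem pow_succ_mul_of_commutator {R : Type*} [Semiring R] {u v w : R} (hc : Commute u w)
    (h : u * v = v * u + w) (k : ℕ) :
    u ^ (k + 1) * v = v * u ^ (k + 1) + (k + 1) • (w * u ^ k) := by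
  induction k with
  | zero => simpa using h
  | succ k ih =>
    calc u ^ (k + 2) * v = u * (u ^ (k + 1) * v) := by rw [pow_succ' u (k + 1), mul_assoc]
      _ = (v * u + w) * u ^ (k + 1) + (k + 1) • (u * (w * u ^ k)) := by
        rw [ih, mul_add, mul_smul_comm, ← mul_assoc, h]
      _ = v * u ^ (k + 2) + (k + 2) • (w * u ^ (k + 1)) := by
        rw [← mul_assoc u w, hc.eq, mul_assoc, ← pow_succ', add_mul, mul_assoc, ← pow_succ',
          succ_nsmul _ (k + 1)]
        abel

section Order

variable {R : Type*} [Semiring R] {u v : PowerSeries R}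

theorem coeff_pow_mul_pow_eq_zero_of_lt (hu : constantCoeff u = 0) (hv : constantCoeff v = 0)
    {n i j : ℕ} (h : n < i + j) : coeff n (u ^ i * v ^ j) = 0 := by
  refine coeff_of_lt_order n ?_
  calc (n : ℕ∞) < i + j := by exact_mod_cast h
    _ ≤ (u ^ i).order + (v ^ j).order := add_le_add
        (le_order_pow_of_constantCoeff_eq_zero i hu) (le_order_pow_of_constantCoeff_eq_zero j hv)
    _ ≤ (u ^ i * v ^ j).order := le_order_mul _ _

theorem coeff_pow_eq_zero_of_lt (hu : constantCoeff u = 0) {n k : ℕ} (h : n < k) :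
    coeff n (u ^ k) = 0 := by
  simpa using coeff_pow_mul_pow_eq_zero_of_lt hu hu (j := 0) h

end Order

section PExp

variable {B : Type*} [Ring B] [Algebra ℂ B] {u v w τ : PowerSeries B}

theorem coeff_pexp_eq_sum (hu : constantCoeff u = 0) {n N : ℕ} (h : n ≤ N) :
    coeff n (pexp u) = ∑ k ∈ range (N + 1), (k ! : ℂ)⁻¹ • coeff n (u ^ k) := by
  rw [pexp, coeff_mk]
  refine sum_subset (range_subset_range.2 (by omega)) fun k _ hk => ?_
  rw [coeff_pow_eq_zero_of_lt hu (by simpa using hk), smul_zero]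

theorem coeff_pexp_mul (hu : constantCoeff u = 0) (a : PowerSeries B) (N : ℕ) :
    coeff N (pexp u * a) = ∑ k ∈ range (N + 1), (k ! : ℂ)⁻¹ • coeff N (u ^ k * a) := by
  simp only [coeff_mul, smul_sum]
  rw [sum_congr rfl fun ij hij => by
    rw [coeff_pexp_eq_sum hu (HasAntidiagonal.antidiagonal.fst_le hij), sum_mul], sum_comm]
  simp only [smul_mul_assoc]

theorem coeff_mul_pexp (hu : constantCoeff u = 0) (a : PowerSeries B) (N : ℕ) :
    coeff N (a * pexp u) = ∑ k ∈ range (N + 1), (k ! : ℂ)⁻¹ • coeff N (a * u ^ k) := by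
  simp only [coeff_mul, smul_sum]
  rw [sum_congr rfl fun ij hij => by
    rw [coeff_pexp_eq_sum hu (HasAntidiagonal.antidiagonal.snd_le hij), mul_sum], sum_comm]
  simp only [mul_smul_comm]

theorem pexp_mul_of_commutator (hu : constantCoeff u = 0) (hw : constantCoeff w = 0)
    (hc : Commute u w) (h : u * v = v * u + w) : pexp u * v = (v + w) * pexp u := by
  ext N
  have hterm (k : ℕ) : ((k + 1)! : ℂ)⁻¹ • coeff N (u ^ (k + 1) * v) =
      ((k + 1)! : ℂ)⁻¹ • coeff N (v * u ^ (k + 1)) + (k ! : ℂ)⁻¹ • coeff N (w * u ^ k) := by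
    rw [pow_succ_mul_of_commutator hc h, map_add, smul_add, map_nsmul,
      ← Nat.cast_smul_eq_nsmul ℂ, smul_smul, Nat.factorial_succ]
    congr 2
    push_cast
    field_simp
  have hlast : coeff N (w * u ^ N) = 0 := by
    simpa using coeff_pow_mul_pow_eq_zero_of_lt hw hu (i := 1) (j := N) (by omega)
  rw [coeff_pexp_mul hu, add_mul, map_add, coeff_mul_pexp hu, coeff_mul_pexp hu,
    sum_range_succ', sum_congr rfl fun k _ => hterm k, sum_add_distrib,
    sum_range_succ' (fun k => (k ! : ℂ)⁻¹ • coeff N (v * u ^ k)),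
    sum_range_succ (fun k => (k ! : ℂ)⁻¹ • coeff N (w * u ^ k)), hlast]
  simp only [pow_zero, one_mul, mul_one, Nat.factorial_zero, Nat.cast_one, inv_one, one_smul,
    smul_zero, add_zero]
  abel

theorem Commute.pexp_left (hu : constantCoeff u = 0) (h : Commute u v) : Commute (pexp u) v := by
  simpa [Commute, SemiconjBy] using
    pexp_mul_of_commutator hu (map_zero _) (Commute.zero_right u) (by simpa using h.eq)

theorem Commute.pexp (hu : constantCoeff u = 0) (hv : constantCoeff v = 0) (h : Commute u v) :
    Commute (pexp u) (pexp v) :=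
  ((h.pexp_left hu).symm.pexp_left hv).symm

theorem pexp_mul_pow_of_commutator (hu : constantCoeff u = 0) (hw : constantCoeff w = 0)
    (hc : Commute u w) (h : u * v = v * u + w) (k : ℕ) :
    pexp u * v ^ k = (v + w) ^ k * pexp u := by
  induction k with
  | zero => simp
  | succ k ih =>
    rw [pow_succ', pow_succ', ← mul_assoc, pexp_mul_of_commutator hu hw hc h, mul_assoc, ih,
      mul_assoc]

theorem pexp_mul_pexp_of_commutator (hu : constantCoeff u = 0) (hv : constantCoeff v = 0)
    (hw : constantCoeff w = 0) (hc : Commute u w) (h : u * v = v * u + w) :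
    pexp u * pexp v = pexp (v + w) * pexp u := by
  ext N
  rw [coeff_mul_pexp hv, coeff_pexp_mul (by simp [hv, hw])]
  simp only [pexp_mul_pow_of_commutator hu hw hc h]

theorem sum_range_sum_antidiagonal_eq_sum_range_sum_range {M : Type*} [AddCommMonoid M]
    {N : ℕ} {f : ℕ → ℕ → M} (hf : ∀ i j, N < i + j → f i j = 0) :
    ∑ k ∈ range (N + 1), ∑ p ∈ antidiagonal k, f p.1 p.2 =
      ∑ i ∈ range (N + 1), ∑ j ∈ range (N + 1), f i j := by
  rw [← sum_product', ← sum_filter_of_ne (p := fun p : ℕ × ℕ => p.1 + p.2 ≤ N)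
      fun p _ hp => by contrapose! hp; exact hf _ _ (by omega),
    ← sum_fiberwise_of_maps_to (g := fun p : ℕ × ℕ => p.1 + p.2) (t := range (N + 1))
      fun p hp => by simp only [mem_filter, mem_product, mem_range] at hp ⊢; omega]
  refine sum_congr rfl fun k hk => sum_congr ?_ fun _ _ => rfl
  ext ⟨i, j⟩
  simp only [mem_filter, mem_product, mem_range, HasAntidiagonal.mem_antidiagonal] at hk ⊢
  omega

theorem pexp_add_of_commute (hu : constantCoeff u = 0) (hv : constantCoeff v = 0)
    (h : Commute u v) : pexp (u + v) = pexp u * pexp v := by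
  ext N
  calc coeff N (pexp (u + v))
      = ∑ k ∈ range (N + 1), ∑ p ∈ antidiagonal k,
          ((p.1 ! : ℂ)⁻¹ * (p.2 ! : ℂ)⁻¹) • coeff N (u ^ p.1 * v ^ p.2) := by
        rw [pexp, coeff_mk]
        refine sum_congr rfl fun k _ => ?_
        rw [h.add_pow', map_sum, smul_sum]
        refine sum_congr rfl fun p hp => ?_
        obtain rfl := HasAntidiagonal.mem_antidiagonal.1 hp
        rw [map_nsmul, ← Nat.cast_smul_eq_nsmul ℂ, smul_smul, Nat.cast_add_choose]
        congr 1
        field_simp [Nat.factorial_ne_zero]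
    _ = ∑ i ∈ range (N + 1), ∑ j ∈ range (N + 1),
          ((i ! : ℂ)⁻¹ * (j ! : ℂ)⁻¹) • coeff N (u ^ i * v ^ j) := by
        refine sum_range_sum_antidiagonal_eq_sum_range_sum_range
          (f := fun i j => ((i ! : ℂ)⁻¹ * (j ! : ℂ)⁻¹) • coeff N (u ^ i * v ^ j))
          fun i j hij => ?_
        rw [coeff_pow_mul_pow_eq_zero_of_lt hu hv hij, smul_zero]
    _ = coeff N (pexp u * pexp v) := by
        simp only [coeff_pexp_mul hu, coeff_mul_pexp hv, smul_sum, smul_smul]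

theorem pexp_mul_pexp_of_central_commutator (hv : constantCoeff v = 0) (hw : constantCoeff w = 0)
    (hτ : constantCoeff τ = 0) (hvτ : Commute v τ) (hwτ : Commute w τ)
    (h : v * w = w * v + τ) : pexp v * pexp w = pexp w * pexp v * pexp τ := by
  rw [pexp_mul_pexp_of_commutator hv hw hτ hvτ h, pexp_add_of_commute hw hτ hwτ, mul_assoc,
    mul_assoc, (hvτ.pexp hv hτ).eq]

end PExp

section EmbC

variable {B B' : Type*} [Ring B] [Algebra ℂ B] [Ring B'] [Algebra ℂ B']

theorem map_pexp (f : B →ₐ[ℂ] B') (u : PowerSeries B) :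
    map f.toRingHom (pexp u) = pexp (map f.toRingHom u) := by
  ext N
  simp only [pexp, coeff_map, coeff_mk, map_sum, ← map_pow]
  exact sum_congr rfl fun k _ => f.map_smul_of_tower _ _

theorem map_embC (f : B →ₐ[ℂ] B') (s : PowerSeries ℂ) : map f.toRingHom (embC s) = embC s := by
  ext n
  simp [embC]

theorem map_embC_mul_C (f : B →ₐ[ℂ] B') (s : PowerSeries ℂ) (b : B) :
    map f.toRingHom (embC s * C b) = embC s * C (f b) := by
  rw [map_mul, map_embC, map_C]
  rfl

theorem constantCoeff_embC (s : PowerSeries ℂ) :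
    constantCoeff (embC s : PowerSeries B) = algebraMap ℂ B (constantCoeff s) := by
  rw [← coeff_zero_eq_constantCoeff_apply, ← coeff_zero_eq_constantCoeff_apply, embC, coeff_map]

theorem constantCoeff_embC_mul_C {s : PowerSeries ℂ} (hs : constantCoeff s = 0) (b : B) :
    constantCoeff (embC s * C b) = 0 := by
  rw [map_mul, constantCoeff_embC, hs, map_zero, zero_mul]

theorem commute_embC (s : PowerSeries ℂ) (g : PowerSeries B) : Commute (embC s) g := by
  ext n
  rw [coeff_mul, coeff_mul, ← Nat.sum_antidiagonal_swap]
  exact sum_congr rfl fun p _ => by simp [embC, Algebra.commutes]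

theorem embC_mul_C_mul_embC_mul_C (s s' : PowerSeries ℂ) (a b : B) :
    embC s * C a * (embC s' * C b) =
      embC (s * s') * C (a * b) := by
  calc embC s * C a * (embC s' * C b)
      = embC s * (C a * embC s') * C b := by simp only [mul_assoc]
    _ = embC s * (embC s' * C a) * C b := by
      rw [(commute_embC s' (C a)).eq]
    _ = embC (s * s') * C (a * b) := by
      simp only [embC, map_mul, mul_assoc]

theorem Commute.embC_mul_C {a b : B} (h : Commute a b) (s s' : PowerSeries ℂ) :
    Commute (embC s * C a) (embC s' * C b) := by
  rw [Commute, SemiconjBy, embC_mul_C_mul_embC_mul_C, embC_mul_C_mul_embC_mul_C, h.eq, mul_comm s]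

end EmbC

theorem pexp_twist {R : Type*} [Ring R] [Algebra ℂ R] {x₁₂ x₁₃ x₂₃ z : R}
    (h₁₃₁₂ : Commute x₁₃ x₁₂) (h₁₃₂₃ : Commute x₁₃ x₂₃) (h₁₃z : Commute x₁₃ z)
    (h₁₂z : Commute x₁₂ z) (h₂₃z : Commute x₂₃ z) (h : x₂₃ * x₁₂ = x₁₂ * x₂₃ + z)
    {θ θ' : PowerSeries ℂ} (hθ : constantCoeff θ = 0) (hθ' : constantCoeff θ' = 0) :
    pexp (embC (-θ) * C (x₁₃ + x₂₃)) * pexp (embC (-θ') * C x₁₂) =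
      pexp (embC (-θ') * C (x₁₂ + x₁₃)) * pexp (embC (-θ) * C x₂₃) *
        pexp (embC (θ' - θ) * C x₁₃ + embC (θ * θ') * C z) := by
  set u₁₃ : PowerSeries R := embC (-θ) * C x₁₃
  set u₂₃ : PowerSeries R := embC (-θ) * C x₂₃
  set v₁₂ : PowerSeries R := embC (-θ') * C x₁₂
  set v₁₃ : PowerSeries R := embC (-θ') * C x₁₃
  set d : PowerSeries R := embC (θ' - θ) * C x₁₃
  set w : PowerSeries R := embC (θ * θ') * C z
  have hu₁₃ : constantCoeff u₁₃ = 0 := constantCoeff_embC_mul_C (by simp [hθ]) _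
  have hu₂₃ : constantCoeff u₂₃ = 0 := constantCoeff_embC_mul_C (by simp [hθ]) _
  have hv₁₂ : constantCoeff v₁₂ = 0 := constantCoeff_embC_mul_C (by simp [hθ']) _
  have hv₁₃ : constantCoeff v₁₃ = 0 := constantCoeff_embC_mul_C (by simp [hθ']) _
  have hd : constantCoeff d = 0 := constantCoeff_embC_mul_C (by simp [hθ, hθ']) _
  have hw : constantCoeff w = 0 := constantCoeff_embC_mul_C (by simp [hθ]) _
  have hsplit : u₁₃ = v₁₃ + d := by
    simp only [u₁₃, v₁₃, d, ← add_mul, embC, ← map_add]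
    congr 2
    ring
  have hweyl : u₂₃ * v₁₂ = v₁₂ * u₂₃ + w := by
    simp only [u₂₃, v₁₂, w, embC_mul_C_mul_embC_mul_C, h, map_add, mul_add, neg_mul_neg,
      mul_comm θ']
  calc pexp (embC (-θ) * C (x₁₃ + x₂₃)) * pexp v₁₂
      = pexp u₁₃ * (pexp u₂₃ * pexp v₁₂) := by
        rw [map_add, mul_add, pexp_add_of_commute hu₁₃ hu₂₃ (h₁₃₂₃.embC_mul_C _ _), mul_assoc]
    _ = pexp v₁₂ * pexp v₁₃ * (pexp d * pexp u₂₃) * pexp w := by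
        rw [pexp_mul_pexp_of_central_commutator hu₂₃ hv₁₂ hw (h₂₃z.embC_mul_C _ _)
            (h₁₂z.embC_mul_C _ _) hweyl, ← mul_assoc, ← mul_assoc,
          ((h₁₃₁₂.embC_mul_C _ _).pexp hu₁₃ hv₁₂).eq, hsplit,
          pexp_add_of_commute hv₁₃ hd ((Commute.refl x₁₃).embC_mul_C _ _)]
        simp only [mul_assoc]
    _ = pexp (v₁₂ + v₁₃) * pexp u₂₃ * pexp (d + w) := by
        rw [((h₁₃₂₃.embC_mul_C _ _).pexp hd hu₂₃).eq,
          pexp_add_of_commute hv₁₂ hv₁₃ (h₁₃₁₂.symm.embC_mul_C _ _),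
          pexp_add_of_commute hd hw (h₁₃z.embC_mul_C _ _)]
        simp only [mul_assoc]
    _ = _ := by rw [← mul_add, ← map_add]

theorem stmt2_general {H : Type*} [Ring H] [Algebra ℂ H]
    (Δ : H →ₐ[ℂ] H ⊗[ℂ] H) (p q t : H)
    (hpq : p * q - q * p = t) (ht : ∀ x : H, Commute t x)
    (hΔp : Δ p = p ⊗ₜ[ℂ] 1 + 1 ⊗ₜ[ℂ] p) (hΔq : Δ q = q ⊗ₜ[ℂ] 1 + 1 ⊗ₜ[ℂ] q)
    (θ θ' : PowerSeries ℂ)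
    (hθ : PowerSeries.constantCoeff θ = 0) (hθ' : PowerSeries.constantCoeff θ' = 0)
    (Dl Dr i12 i23 : (H ⊗[ℂ] H) →ₐ[ℂ] H ⊗[ℂ] (H ⊗[ℂ] H))
    (hDl : Dl = (Algebra.TensorProduct.assoc ℂ ℂ ℂ H H H).toAlgHom.comp
      (Algebra.TensorProduct.map Δ (AlgHom.id ℂ H)))
    (hDr : Dr = Algebra.TensorProduct.map (AlgHom.id ℂ H) Δ)
    (hi12 : i12 = Algebra.TensorProduct.map (AlgHom.id ℂ H) Algebra.TensorProduct.includeLeft)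
    (hi23 : i23 = Algebra.TensorProduct.includeRight) :
    PowerSeries.map Dl.toRingHom
        (pexp (embC (-θ) * PowerSeries.C (p ⊗ₜ[ℂ] q))) *
      PowerSeries.map i12.toRingHom
        (pexp (embC (-θ') * PowerSeries.C (p ⊗ₜ[ℂ] q))) =
    PowerSeries.map Dr.toRingHom
        (pexp (embC (-θ') * PowerSeries.C (p ⊗ₜ[ℂ] q))) *
      PowerSeries.map i23.toRingHom
        (pexp (embC (-θ) * PowerSeries.C (p ⊗ₜ[ℂ] q))) *
      pexp (embC (θ' - θ) * PowerSeries.C (p ⊗ₜ[ℂ] ((1 : H) ⊗ₜ[ℂ] q))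
        + embC (θ * θ') * PowerSeries.C (p ⊗ₜ[ℂ] (t ⊗ₜ[ℂ] q))) := by
  have e₁ : Dl (p ⊗ₜ q) = p ⊗ₜ (1 ⊗ₜ q) + 1 ⊗ₜ (p ⊗ₜ q) := by
    simp [hDl, hΔp, TensorProduct.add_tmul]
  have e₂ : i12 (p ⊗ₜ q) = p ⊗ₜ (q ⊗ₜ 1) := by simp [hi12]
  have e₃ : Dr (p ⊗ₜ q) = p ⊗ₜ (q ⊗ₜ 1) + p ⊗ₜ (1 ⊗ₜ q) := by
    simp [hDr, hΔq, TensorProduct.tmul_add]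
  have e₄ : i23 (p ⊗ₜ q) = 1 ⊗ₜ (p ⊗ₜ q) := by simp [hi23]
  simp only [map_pexp, map_embC_mul_C, e₁, e₂, e₃, e₄]
  refine pexp_twist ((Commute.refl p).tmul ((Commute.one_left q).tmul (Commute.one_right q)))
    ((Commute.one_right p).tmul ((Commute.one_left p).tmul (Commute.refl q)))
    ((Commute.refl p).tmul ((Commute.one_left t).tmul (Commute.refl q)))
    ((Commute.refl p).tmul ((ht q).symm.tmul (Commute.one_left q)))
    ((Commute.one_left p).tmul ((ht p).symm.tmul (Commute.refl q))) ?_ hθ hθ'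
  rw [← hpq]
  simp only [Algebra.TensorProduct.tmul_mul_tmul, one_mul, mul_one, TensorProduct.sub_tmul,
    TensorProduct.tmul_sub]
  abel

/-- The twist identity `(Δ⊗id)(F_θ⁻¹)·(F_{θ'}⁻¹⊗1) = (id⊗Δ)(F_{θ'}⁻¹)·(1⊗F_θ⁻¹)·Φ_{θ,θ'}`
for `F_θ = exp(θ p⊗q)` and `Φ_{θ,θ'} = exp(−p⊗(θ−θ'−θθ't)⊗q)`, in the universal
enveloping algebra of the Heisenberg Lie algebra (`H` a ℂ-algebra with primitive elements
`p, q, t` satisfying `[p,q] = t` and `t` central, `Δ` the coproduct). -/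
theorem stmt2 {H : Type*} [Ring H] [Algebra ℂ H]
    (Δ : H →ₐ[ℂ] H ⊗[ℂ] H) (p q t : H)
    (hpq : p * q - q * p = t) (ht : ∀ x : H, Commute t x)
    (hΔp : Δ p = p ⊗ₜ[ℂ] 1 + 1 ⊗ₜ[ℂ] p) (hΔq : Δ q = q ⊗ₜ[ℂ] 1 + 1 ⊗ₜ[ℂ] q)
    (hΔt : Δ t = t ⊗ₜ[ℂ] 1 + 1 ⊗ₜ[ℂ] t)
    (θ θ' : PowerSeries ℂ)
    (hθ : PowerSeries.constantCoeff θ = 0) (hθ' : PowerSeries.constantCoeff θ' = 0)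
    (Dl Dr i12 i23 : (H ⊗[ℂ] H) →ₐ[ℂ] H ⊗[ℂ] (H ⊗[ℂ] H))
    (hDl : Dl = (Algebra.TensorProduct.assoc ℂ ℂ ℂ H H H).toAlgHom.comp
      (Algebra.TensorProduct.map Δ (AlgHom.id ℂ H)))
    (hDr : Dr = Algebra.TensorProduct.map (AlgHom.id ℂ H) Δ)
    (hi12 : i12 = Algebra.TensorProduct.map (AlgHom.id ℂ H) Algebra.TensorProduct.includeLeft)
    (hi23 : i23 = Algebra.TensorProduct.includeRight) :
    PowerSeries.map Dl.toRingHom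
        (pexp (embC (-θ) * PowerSeries.C (p ⊗ₜ[ℂ] q))) *
      PowerSeries.map i12.toRingHom
        (pexp (embC (-θ') * PowerSeries.C (p ⊗ₜ[ℂ] q))) =
    PowerSeries.map Dr.toRingHom
        (pexp (embC (-θ') * PowerSeries.C (p ⊗ₜ[ℂ] q))) *
      PowerSeries.map i23.toRingHom
        (pexp (embC (-θ) * PowerSeries.C (p ⊗ₜ[ℂ] q))) *
      pexp (embC (θ' - θ) * PowerSeries.C (p ⊗ₜ[ℂ] ((1 : H) ⊗ₜ[ℂ] q))
        + embC (θ * θ') * PowerSeries.C (p ⊗ₜ[ℂ] (t ⊗ₜ[ℂ] q))) :=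
  stmt2_general Δ p q t hpq ht hΔp hΔq θ θ' hθ hθ' Dl Dr i12 i23 hDl hDr hi12 hi23
end

section
/- Let τ ∈ ℂ with Im(τ) > 0, q = e^{πiτ}, and let n₁, n₂ > 0 be integers. For c₁: ℤ/n₁ℤ → ℂ and c₂: ℤ/n₂ℤ → ℂ, define θ_i(z) = Σ_{k∈ℤ} c_i(k) q^{k²/n_i} e^{2πikz} (absolutely convergent since |q| < 1). Then θ₁(z)·θ₂(z) = Σ_{k∈ℤ} c₃(k) q^{k²/(n₁+n₂)} e^{2πikz}, where c₃(k) = Σ_{k₁+k₂=k} c₁(k₁)c₂(k₂) q^{(k₁n₂−k₂n₁)²/(n₁n₂(n₁+n₂))}, and c₃ is periodic with period n₁+n₂. -/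
/-!
With `q = e^{πiτ}`, Mathlib's `jacobiTheta₂_term k z (τ / n)` is `q^{k²/n} e^{2πikz}`, so both
factors are absolutely convergent series over `ℤ` and their product is a Cauchy product. Grouping
the terms by `k = k₁ + k₂` and using
`k₁²/n₁ + k₂²/n₂ = (k₁+k₂)²/(n₁+n₂) + (k₁n₂ - k₂n₁)²/(n₁n₂(n₁+n₂))` produces the coefficients
`c₃`. Shifting `k` by `n₁ + n₂` and the summation index `k₁` by `n₁` leaves every summand of `c₃`
unchanged, which gives its periodicity.
-/

open Complex Real

theorem tsum_mul_tsum_eq_tsum_tsum_sub_of_summable_norm {G R : Type*} [AddCommGroup G]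
    [NormedRing R] [CompleteSpace R] {f g : G → R}
    (hf : Summable fun x => ‖f x‖) (hg : Summable fun x => ‖g x‖) :
    (∑' x, f x) * (∑' y, g y) = ∑' (x) (y), f y * g (x - y) := by
  let e : G × G ≃ G × G :=
    { toFun p := (p.2, p.1 - p.2), invFun p := (p.1 + p.2, p.1),
      left_inv p := by simp, right_inv p := by simp }
  have hsum : Summable fun p : G × G => f p.1 * g p.2 := summable_mul_of_summable_norm hf hg
  rw [tsum_mul_tsum_of_summable_norm hf hg, ← e.tsum_eq]
  exact (e.summable_iff.mpr hsum).tsum_prod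

lemma exp_mul_exp_eq_jacobiTheta₂_term (k : ℤ) (z τ a : ℂ) :
    cexp (π * I * τ * (k ^ 2 / a)) * cexp (2 * π * I * k * z) = jacobiTheta₂_term k z (τ / a) := by
  rw [jacobiTheta₂_term, ← Complex.exp_add]
  ring_nf

lemma summable_norm_mul_jacobiTheta₂_term {n : ℕ} [NeZero n] (c : ZMod n → ℂ) (z : ℂ) {τ : ℂ}
    (hτ : 0 < τ.im) : Summable fun k : ℤ => ‖c k * jacobiTheta₂_term k z τ‖ := by
  obtain ⟨C, hC⟩ := Finite.exists_le fun x : ZMod n => ‖c x‖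
  have hθ : Summable fun k : ℤ => ‖jacobiTheta₂_term k z τ‖ :=
    summable_norm_iff.mpr ((summable_jacobiTheta₂_term_iff z τ).mpr hτ)
  refine (hθ.mul_left C).of_nonneg_of_le (fun k => norm_nonneg _) fun k => ?_
  rw [norm_mul]
  exact mul_le_mul_of_nonneg_right (hC _) (norm_nonneg _)

lemma jacobiTheta₂_term_div_mul_jacobiTheta₂_term_div (j k : ℤ) (z τ : ℂ) {a b : ℂ}
    (ha : a ≠ 0) (hb : b ≠ 0) (hab : a + b ≠ 0) :
    jacobiTheta₂_term j z (τ / a) * jacobiTheta₂_term (k - j) z (τ / b) =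
      cexp (π * I * τ * ((j * b - (k - j : ℤ) * a) ^ 2 / (a * b * (a + b)))) *
        jacobiTheta₂_term k z (τ / (a + b)) := by
  simp only [jacobiTheta₂_term, ← Complex.exp_add]
  congr 1
  push_cast
  field_simp
  ring

noncomputable def thetaProductCoeff (τ : ℂ) {n₁ n₂ : ℕ} (c₁ : ZMod n₁ → ℂ) (c₂ : ZMod n₂ → ℂ)
    (k : ℤ) : ℂ :=
  ∑' k₁ : ℤ, c₁ (k₁ : ZMod n₁) * c₂ ((k - k₁ : ℤ) : ZMod n₂) *
    cexp (π * I * τ * (((k₁ : ℂ) * n₂ - (k - k₁ : ℤ) * n₁) ^ 2 / (n₁ * n₂ * (n₁ + n₂))))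

lemma thetaProductCoeff_add_add (τ : ℂ) {n₁ n₂ : ℕ} (c₁ : ZMod n₁ → ℂ) (c₂ : ZMod n₂ → ℂ)
    (k : ℤ) : thetaProductCoeff τ c₁ c₂ (k + (n₁ + n₂)) = thetaProductCoeff τ c₁ c₂ k := by
  rw [thetaProductCoeff, thetaProductCoeff, ← (Equiv.addRight (n₁ : ℤ)).tsum_eq]
  refine tsum_congr fun j => ?_
  have h₁ : ((j + n₁ : ℤ) : ZMod n₁) = (j : ZMod n₁) := by simp
  have h₂ : ((k + (n₁ + n₂) - (j + n₁) : ℤ) : ZMod n₂) = ((k - j : ℤ) : ZMod n₂) := by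
    push_cast [ZMod.natCast_self]; ring
  simp only [Equiv.coe_addRight, h₁, h₂]
  congr 3
  push_cast
  ring

theorem tsum_mul_jacobiTheta₂_term_mul_tsum_mul_jacobiTheta₂_term {n₁ n₂ : ℕ}
    [NeZero n₁] [NeZero n₂] (c₁ : ZMod n₁ → ℂ) (c₂ : ZMod n₂ → ℂ) (z : ℂ) {τ : ℂ} (hτ : 0 < τ.im) :
    (∑' k : ℤ, c₁ k * jacobiTheta₂_term k z (τ / n₁)) *
        (∑' k : ℤ, c₂ k * jacobiTheta₂_term k z (τ / n₂)) =
      ∑' k : ℤ, thetaProductCoeff τ c₁ c₂ k * jacobiTheta₂_term k z (τ / (n₁ + n₂)) := by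
  have hτ₁ : 0 < (τ / n₁).im := by
    rw [div_natCast_im]; exact div_pos hτ (mod_cast Nat.pos_of_neZero n₁)
  have hτ₂ : 0 < (τ / n₂).im := by
    rw [div_natCast_im]; exact div_pos hτ (mod_cast Nat.pos_of_neZero n₂)
  rw [tsum_mul_tsum_eq_tsum_tsum_sub_of_summable_norm
    (summable_norm_mul_jacobiTheta₂_term c₁ z hτ₁) (summable_norm_mul_jacobiTheta₂_term c₂ z hτ₂)]
  refine tsum_congr fun k => ?_
  rw [thetaProductCoeff, ← tsum_mul_right]
  refine tsum_congr fun j => ?_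
  have hn : (n₁ : ℂ) + n₂ ≠ 0 := by exact_mod_cast (Nat.pos_of_neZero (n₁ + n₂)).ne'
  rw [mul_mul_mul_comm, jacobiTheta₂_term_div_mul_jacobiTheta₂_term_div j k z τ
    (NeZero.ne _) (NeZero.ne _) hn]
  ring

/-- Product formula for theta functions: with `q = e^{πiτ}`, `|q| < 1`, and
`θ_i(z) = Σ_k c_i(k) q^{k²/n_i} e^{2πikz}`, one has
`θ₁·θ₂ = Σ_k c₃(k) q^{k²/(n₁+n₂)} e^{2πikz}` where
`c₃(k) = Σ_{k₁+k₂=k} c₁(k₁)c₂(k₂) q^{(k₁n₂−k₂n₁)²/(n₁n₂(n₁+n₂))}`, and `c₃` is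
`(n₁+n₂)`-periodic. Here `q^r` for rational `r` means `e^{πiτr}`. -/
theorem stmt12 (τ : ℂ) (hτ : 0 < τ.im) (n₁ n₂ : ℕ) (h₁ : 0 < n₁) (h₂ : 0 < n₂)
    (c₁ : ZMod n₁ → ℂ) (c₂ : ZMod n₂ → ℂ) (c₃ : ℤ → ℂ)
    (hc₃ : ∀ k : ℤ, c₃ k = ∑' k₁ : ℤ, c₁ (k₁ : ZMod n₁) * c₂ ((k - k₁ : ℤ) : ZMod n₂) *
      Complex.exp (Real.pi * Complex.I * τ *
        (((k₁ : ℂ) * n₂ - (k - k₁ : ℤ) * n₁) ^ 2 / (n₁ * n₂ * (n₁ + n₂))))) :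
    (∀ k : ℤ, c₃ (k + (n₁ + n₂)) = c₃ k) ∧
    (∀ z : ℂ,
      (∑' k : ℤ, c₁ (k : ZMod n₁) *
          Complex.exp (Real.pi * Complex.I * τ * ((k : ℂ) ^ 2 / n₁)) *
          Complex.exp (2 * Real.pi * Complex.I * k * z)) *
      (∑' k : ℤ, c₂ (k : ZMod n₂) *
          Complex.exp (Real.pi * Complex.I * τ * ((k : ℂ) ^ 2 / n₂)) *
          Complex.exp (2 * Real.pi * Complex.I * k * z)) =
      ∑' k : ℤ, c₃ k *
          Complex.exp (Real.pi * Complex.I * τ * ((k : ℂ) ^ 2 / (n₁ + n₂))) *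
          Complex.exp (2 * Real.pi * Complex.I * k * z)) := by
  obtain rfl : c₃ = thetaProductCoeff τ c₁ c₂ := funext hc₃
  have : NeZero n₁ := ⟨h₁.ne'⟩
  have : NeZero n₂ := ⟨h₂.ne'⟩
  refine ⟨thetaProductCoeff_add_add τ c₁ c₂, fun z => ?_⟩
  simp only [mul_assoc (c₁ _), mul_assoc (c₂ _), mul_assoc (thetaProductCoeff τ c₁ c₂ _),
    exp_mul_exp_eq_jacobiTheta₂_term]
  exact tsum_mul_jacobiTheta₂_term_mul_tsum_mul_jacobiTheta₂_term c₁ c₂ z hτ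
end

section
/- Every smooth function φ: ℝ → ℂ with period d (d a positive integer) can be written uniquely as φ(x) = Σ_{k=1}^{d} e^{2πi(k/d)x} φ_k(x) with each φ_k smooth of period 1. Consequently C^∞(ℝ/dℤ) is a free module of rank d over C^∞(ℝ/ℤ). -/
open Complex Finset

private lemma rootPow (d : ℕ) (hd : 0 < d) (n : ℤ) :
    Complex.exp (2 * Real.pi * Complex.I * n / d) ^ d = 1 := by
  rw [← Complex.exp_nat_mul]
  have hdc : (d:ℂ) ≠ 0 := Nat.cast_ne_zero.mpr hd.ne'
  have : (d:ℂ) * (2 * Real.pi * Complex.I * n / d) = n * (2 * Real.pi * Complex.I) := by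
    field_simp
  rw [this, Complex.exp_int_mul_two_pi_mul_I]

private lemma rootNeOne (d : ℕ) (hd : 0 < d) (n : ℤ) (hn : n ≠ 0) (hlt : n.natAbs < d) :
    Complex.exp (2 * Real.pi * Complex.I * n / d) ≠ 1 := by
  intro h
  rw [Complex.exp_eq_one_iff] at h
  obtain ⟨m, hm⟩ := h
  have hdc : (d:ℂ) ≠ 0 := Nat.cast_ne_zero.mpr hd.ne'
  have hπ : (Real.pi : ℂ) ≠ 0 := Complex.ofReal_ne_zero.mpr Real.pi_ne_zero
  have hI := Complex.I_ne_zero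
  have h2' : (2:ℂ) * Real.pi * Complex.I ≠ 0 := by
    simp [hπ, hI]
  have e : (2 * (Real.pi:ℂ) * Complex.I) * ((n:ℂ)/d) = (2 * (Real.pi:ℂ) * Complex.I) * m := by
    linear_combination hm
  have e2 := mul_left_cancel₀ h2' e
  rw [div_eq_iff hdc] at e2
  have hnm : n = m * d := by exact_mod_cast e2
  have : (d:ℤ) ≤ n.natAbs := by
    rcases eq_or_ne m 0 with rfl | hm0
    · simp at hnm; omega
    · calc (d:ℤ) ≤ |m| * d := by
            have : 1 ≤ |m| := Int.one_le_abs hm0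
            nlinarith [Int.ofNat_le.mpr hd.le]
        _ = |n| := by rw [hnm, abs_mul]; simp [abs_of_nonneg (Int.ofNat_nonneg d)]
        _ = n.natAbs := (Int.abs_eq_natAbs n)
  omega

private lemma geomZero (d : ℕ) (hd : 0 < d) (n : ℤ) (hn : n ≠ 0) (hlt : n.natAbs < d) :
    ∑ j ∈ Finset.range d, Complex.exp (2 * Real.pi * Complex.I * n / d) ^ j = 0 := by
  rw [geom_sum_eq (rootNeOne d hd n hn hlt), rootPow d hd n, sub_self, zero_div]

noncomputable def cA (d : ℕ) (k : Fin d) : ℂ :=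
  2 * Real.pi * Complex.I * ((((k : ℕ) : ℂ) + 1) / d)

noncomputable def psiA (d : ℕ) (φ : ℝ → ℂ) (k : Fin d) (x : ℝ) : ℂ :=
  (∑ j ∈ Finset.range d, Complex.exp (-(cA d k) * ((x : ℂ) + j)) * φ (x + j)) / d

private lemma psiA_smooth (d : ℕ) (φ : ℝ → ℂ) (hφ : ContDiff ℝ (⊤ : ℕ∞) φ) (k : Fin d) :
    ContDiff ℝ (⊤ : ℕ∞) (psiA d φ k) := by
  unfold psiA
  apply ContDiff.div_const
  apply ContDiff.sum
  intro j _
  apply ContDiff.mul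
  · exact Complex.contDiff_exp.comp
      (contDiff_const.mul (Complex.ofRealCLM.contDiff.add contDiff_const))
  · exact hφ.comp (contDiff_id.add contDiff_const)

private lemma expCd (d : ℕ) (hd : 0 < d) (k : Fin d) :
    Complex.exp (-(cA d k) * d) = 1 := by
  have hdc : (d:ℂ) ≠ 0 := Nat.cast_ne_zero.mpr hd.ne'
  have : -(cA d k) * d = ((-(((k:ℕ):ℤ)+1) : ℤ) : ℂ) * (2 * Real.pi * Complex.I) := by
    simp only [cA]; push_cast; field_simp
  rw [this, Complex.exp_int_mul_two_pi_mul_I]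

private lemma psiA_per (d : ℕ) (hd : 0 < d) (φ : ℝ → ℂ)
    (hper : ∀ x : ℝ, φ (x + d) = φ x) (k : Fin d) (x : ℝ) :
    psiA d φ k (x + 1) = psiA d φ k x := by
  set g : ℕ → ℂ := fun j => Complex.exp (-(cA d k) * ((x : ℂ) + j)) * φ (x + j) with hg
  have hgs : ∀ j : ℕ, Complex.exp (-(cA d k) * (((x + 1 : ℝ) : ℂ) + j)) * φ ((x + 1) + j)
      = g (j + 1) := by
    intro j
    simp only [hg]
    have e1 : (((x + 1 : ℝ) : ℂ) + j) = ((x : ℂ) + ((j + 1 : ℕ) : ℂ)) := by push_cast; ring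
    have e2 : (x + 1) + (j : ℝ) = x + ((j + 1 : ℕ) : ℝ) := by push_cast; ring
    rw [e1, e2]
  have hgd : g d = g 0 := by
    simp only [hg]
    have e3 : -(cA d k) * ((x : ℂ) + (d : ℕ)) = -(cA d k) * ((x : ℂ) + (0 : ℕ)) + -(cA d k) * d := by
      push_cast; ring
    have e4 : x + ((d : ℕ) : ℝ) = x + (d : ℝ) := by norm_num
    rw [e3, Complex.exp_add, expCd d hd k, mul_one, e4, hper]
    norm_num
  have key : ∑ j ∈ Finset.range d, g (j + 1) = ∑ j ∈ Finset.range d, g j := by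
    have h1 := Finset.sum_range_succ' g d
    have h2 := Finset.sum_range_succ g d
    rw [hgd] at h2
    exact add_right_cancel (h1.symm.trans h2)
  unfold psiA
  rw [show (∑ j ∈ Finset.range d,
        Complex.exp (-(cA d k) * (((x + 1 : ℝ) : ℂ) + j)) * φ ((x + 1) + j))
      = ∑ j ∈ Finset.range d, g (j + 1) from Finset.sum_congr rfl fun j _ => hgs j, key]

private lemma sumExpKer (d : ℕ) (hd : 0 < d) (j : ℕ) (hj : j ≠ 0) (hjd : j < d) :
    ∑ k : Fin d, Complex.exp (-(cA d k) * j) = 0 := by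
  have hζ : ∀ k : Fin d, Complex.exp (-(cA d k) * j)
      = Complex.exp (2 * Real.pi * Complex.I * ((-(j:ℤ) : ℤ) : ℂ) / d) ^ ((k:ℕ)+1) := by
    intro k
    rw [← Complex.exp_nat_mul]
    congr 1
    simp only [cA]; push_cast; ring
  simp only [hζ]
  rw [Fin.sum_univ_eq_sum_range (fun k => Complex.exp (2 * Real.pi * Complex.I * ((-(j:ℤ) : ℤ) : ℂ) / d) ^ (k+1)) d]
  have : ∀ k, Complex.exp (2 * Real.pi * Complex.I * ((-(j:ℤ) : ℤ) : ℂ) / d) ^ (k+1)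
      = Complex.exp (2 * Real.pi * Complex.I * ((-(j:ℤ) : ℤ) : ℂ) / d) ^ k
        * Complex.exp (2 * Real.pi * Complex.I * ((-(j:ℤ) : ℤ) : ℂ) / d) := fun k => pow_succ _ _
  simp only [this]
  rw [← Finset.sum_mul, geomZero d hd (-(j:ℤ)) (by omega) (by simpa using hjd), zero_mul]

private lemma psiA_sum (d : ℕ) (hd : 0 < d) (φ : ℝ → ℂ) (x : ℝ) :
    φ x = ∑ k : Fin d, Complex.exp (cA d k * x) * psiA d φ k x := by
  symm
  have hdc : (d:ℂ) ≠ 0 := Nat.cast_ne_zero.mpr hd.ne'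
  have hterm : ∀ (k : Fin d) (j : ℕ),
      Complex.exp (cA d k * x) * (Complex.exp (-(cA d k) * ((x : ℂ) + j)) * φ (x + j))
      = Complex.exp (-(cA d k) * j) * φ (x + j) := by
    intro k j
    rw [← mul_assoc, ← Complex.exp_add]
    congr 2
    ring
  calc ∑ k : Fin d, Complex.exp (cA d k * x) * psiA d φ k x
      = (∑ k : Fin d, ∑ j ∈ Finset.range d, Complex.exp (-(cA d k) * j) * φ (x + j)) / d := by
        rw [Finset.sum_div]
        refine Finset.sum_congr rfl fun k _ => ?_
        unfold psiA
        rw [← mul_div_assoc, Finset.mul_sum]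
        congr 1
        exact Finset.sum_congr rfl fun j _ => hterm k j
    _ = (∑ j ∈ Finset.range d, (∑ k : Fin d, Complex.exp (-(cA d k) * j)) * φ (x + j)) / d := by
        rw [Finset.sum_comm]
        congr 1
        exact Finset.sum_congr rfl fun j _ => (Finset.sum_mul _ _ _).symm
    _ = φ x := by
        rw [Finset.sum_eq_single 0
          (fun j _ hj0 => by
            rw [sumExpKer d hd j hj0 (by simpa using ‹j ∈ Finset.range d›), zero_mul])
          (fun h => absurd (Finset.mem_range.mpr hd) h)]
        simp only [Nat.cast_zero, mul_zero, Complex.exp_zero, add_zero]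
        rw [Finset.sum_const, Finset.card_univ, Fintype.card_fin]
        simp only [nsmul_eq_mul, mul_one]
        field_simp

private lemma psiA_unique (d : ℕ) (hd : 0 < d) (φ : ℝ → ℂ) (ψ : Fin d → ℝ → ℂ)
    (hpsi : ∀ (k : Fin d) (x : ℝ), ψ k (x + 1) = ψ k x)
    (hsum : ∀ x : ℝ, φ x = ∑ m : Fin d, Complex.exp (cA d m * x) * ψ m x)
    (k : Fin d) (x : ℝ) : ψ k x = psiA d φ k x := by
  have hdc : (d:ℂ) ≠ 0 := Nat.cast_ne_zero.mpr hd.ne'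
  have hpern : ∀ (m : Fin d) (x : ℝ) (j : ℕ), ψ m (x + j) = ψ m x := by
    intro m x j
    induction j with
    | zero => simp
    | succ n ih =>
        have e : x + ((n + 1 : ℕ) : ℝ) = (x + n) + 1 := by push_cast; ring
        rw [e, hpsi m, ih]
  have hin : ∀ m : Fin d, m ≠ k →
      ∑ j ∈ Finset.range d, Complex.exp ((cA d m - cA d k) * ((x : ℂ) + j)) = 0 := by
    intro m hm
    have hrep : ∀ j : ℕ, Complex.exp ((cA d m - cA d k) * ((x : ℂ) + j))
        = Complex.exp ((cA d m - cA d k) * x)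
          * Complex.exp (2 * Real.pi * Complex.I
              * (((((m:ℕ):ℤ) - ((k:ℕ):ℤ)) : ℤ) : ℂ) / d) ^ j := by
      intro j
      rw [← Complex.exp_nat_mul, ← Complex.exp_add]
      congr 1
      simp only [cA]; push_cast; ring
    simp only [hrep]
    have hvne : (m : ℕ) ≠ (k : ℕ) := fun h => hm (Fin.ext h)
    have h1 := m.isLt
    have h2 := k.isLt
    rw [← Finset.mul_sum, geomZero d hd _ (by omega) (by omega), mul_zero]
  symm
  calc psiA d φ k x
      = (∑ j ∈ Finset.range d, ∑ m : Fin d,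
          Complex.exp ((cA d m - cA d k) * ((x : ℂ) + j)) * ψ m x) / d := by
        unfold psiA
        congr 1
        refine Finset.sum_congr rfl fun j _ => ?_
        rw [hsum (x + j), Finset.mul_sum]
        refine Finset.sum_congr rfl fun m _ => ?_
        rw [hpern m x j, ← mul_assoc, ← Complex.exp_add]
        congr 2
        push_cast; ring
    _ = (∑ m : Fin d, (∑ j ∈ Finset.range d,
          Complex.exp ((cA d m - cA d k) * ((x : ℂ) + j))) * ψ m x) / d := by
        rw [Finset.sum_comm]
        congr 1
        exact Finset.sum_congr rfl fun m _ => (Finset.sum_mul _ _ _).symm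
    _ = ψ k x := by
        rw [Finset.sum_eq_single k
          (fun m _ hmk => by rw [hin m hmk, zero_mul])
          (fun h => absurd (Finset.mem_univ k) h)]
        rw [sub_self]
        simp only [zero_mul, Complex.exp_zero]
        rw [Finset.sum_const, Finset.card_range]
        simp only [nsmul_eq_mul, mul_one]
        field_simp

/-- Every smooth `φ : ℝ → ℂ` of period `d` can be written uniquely as
`φ(x) = Σ_{k=1}^d e^{2πi(k/d)x} φ_k(x)` with each `φ_k` smooth of period `1`;
hence `C^∞(ℝ/dℤ)` is a free module of rank `d` over `C^∞(ℝ/ℤ)`. -/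
theorem stmt14 (d : ℕ) (hd : 0 < d) (φ : ℝ → ℂ) (hφ : ContDiff ℝ (⊤ : ℕ∞) φ)
    (hper : ∀ x : ℝ, φ (x + d) = φ x) :
    ∃! ψ : Fin d → ℝ → ℂ,
      (∀ k : Fin d, ContDiff ℝ (⊤ : ℕ∞) (ψ k) ∧ ∀ x : ℝ, ψ k (x + 1) = ψ k x) ∧
      ∀ x : ℝ, φ x = ∑ k : Fin d,
        Complex.exp (2 * Real.pi * Complex.I * ((((k : ℕ) : ℂ) + 1) / d) * x) * ψ k x := by
  refine ⟨psiA d φ, ⟨fun k => ⟨psiA_smooth d φ hφ k, fun x => psiA_per d hd φ hper k x⟩,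
    fun x => ?_⟩, ?_⟩
  · simpa only [cA] using psiA_sum d hd φ x
  · rintro ψ ⟨h1, h2⟩
    funext k x
    exact psiA_unique d hd φ ψ (fun m => (h1 m).2) (fun y => by simpa only [cA] using h2 y) k x
end
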